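/- arXiv:1804.09233 — 3 statements merged into one kernel-verified Lean document; each statement's English description precedes it below -/
import Mathlib

section
/- Fix E ≥ 0 groups indexed by e ∈ {0, 1, …, E} with sizes K_e ≥ 1, real parameters a_e, b_e, positive parameters c_e, and λ > 0, α > 0, β > 0. Let x_{e,k} ∈ ℝ for each e and k ∈ {1,…,K_e} be given data, and set N = Σ_{e=0}^E K_e, α' = α + N/2, 1/λ' = Σ_{e=0}^E K_e b_e²/c_e² + 1/λ, m' = λ' · Σ_{e=0}^E (b_e/c_e²) · Σ_{k=1}^{K_e} (x_{e,k} − a_e), β' = β + (1/2)·( Σ_{e=0}^E Σ_{k=1}^{K_e} (x_{e,k} − a_e)²/c_e² − m'²/λ' ). Then for all z ∈ ℝ and all τ > 0, g_{α,β}(τ) · φ_{0, λ/τ}(z) · ∏_{e=0}^E ∏_{k=1}^{K_e} φ_{a_e + b_e z, c_e²/τ}(x_{e,k}) = C · g_{α',β'}(τ) · φ_{m', λ'/τ}(z), where C = (β^α · Γ(α')) / (Γ(α) · β'^{α'}) · √(λ'/λ) · ∏_{e=0}^E (2π c_e²)^{−K_e/2}. In particular, the posterior of (Z, τ) given the data in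 the exchangeable Gamma-Normal mixed effect model is again a Normal-Gamma distribution with parameters (m', λ', α', β'). -/
open MeasureTheory Real

/-- The Gamma(α, β) probability density function. -/
noncomputable def gammaPdf (a b t : ℝ) : ℝ :=
  if 0 < t then b ^ a / Real.Gamma a * t ^ (a - 1) * Real.exp (-b * t) else 0

/-- The normal probability density function with mean `m` and variance `v`. -/
noncomputable def normalPdf (m v x : ℝ) : ℝ :=
  (2 * Real.pi * v) ^ (-(1 : ℝ) / 2) * Real.exp (-(x - m) ^ 2 / (2 * v))

/-! Each density is a constant times `τ ^ p * exp (-q * τ)`. In the product the powers of `τ`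
add up to `α' - 1/2`, and the exponent `β + z²/(2λ) + Σ (x - a - b z)²/(2c²)` is a quadratic in `z`
whose completed square is `β' + (z - m')²/(2λ')`; what is left over is the constant `C`. -/

open Finset

lemma normalPdf_div {m v τ : ℝ} (y : ℝ) (hv : 0 < v) (hτ : 0 < τ) :
    normalPdf m (v / τ) y =
      (2 * π * v) ^ (-(1 : ℝ) / 2) * τ ^ ((1 : ℝ) / 2) * exp (-((y - m) ^ 2 / (2 * v)) * τ) := by
  have h2πv : 0 < 2 * π * v := by positivity
  rw [normalPdf, mul_div_assoc', div_rpow h2πv.le hτ.le, neg_div, rpow_neg hτ.le, div_inv_eq_mul]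
  congr 2
  field_simp

lemma gammaPdf_mul_normalPdf_div {α β m v τ : ℝ} (z : ℝ) (hv : 0 < v) (hτ : 0 < τ) :
    gammaPdf α β τ * normalPdf m (v / τ) z =
      β ^ α / Gamma α * (2 * π * v) ^ (-(1 : ℝ) / 2) * τ ^ (α - 1 / 2) *
        exp (-(β + (z - m) ^ 2 / (2 * v)) * τ) := by
  rw [gammaPdf, if_pos hτ, normalPdf_div z hv hτ,
    show α - 1 / 2 = (α - 1) + 1 / 2 by ring, rpow_add hτ,
    show -(β + (z - m) ^ 2 / (2 * v)) * τ = -β * τ + -((z - m) ^ 2 / (2 * v)) * τ by ring,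
    exp_add]
  ring

lemma prod_normalPdf_div {ι : Type*} [Fintype ι] {m v τ : ℝ} (x : ι → ℝ) (hv : 0 < v)
    (hτ : 0 < τ) :
    ∏ i, normalPdf m (v / τ) (x i) =
      (2 * π * v) ^ (-(Fintype.card ι : ℝ) / 2) * τ ^ ((Fintype.card ι : ℝ) / 2) *
        exp (-(∑ i, (x i - m) ^ 2 / (2 * v)) * τ) := by
  have h2πv : 0 < 2 * π * v := by positivity
  simp only [normalPdf_div _ hv hτ, prod_mul_distrib, prod_const, card_univ, ← exp_sum,
    ← sum_mul, sum_neg_distrib]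
  rw [← rpow_mul_natCast h2πv.le, ← rpow_mul_natCast hτ.le]
  congr 3 <;> ring

lemma prod_prod_normalPdf_div {ι : Type*} [Fintype ι] {K : ι → ℕ} {τ : ℝ} (μ v : ι → ℝ)
    (hv : ∀ e, 0 < v e) (hτ : 0 < τ) (x : (e : ι) → Fin (K e) → ℝ) :
    ∏ e, ∏ k, normalPdf (μ e) (v e / τ) (x e k) =
      (∏ e, (2 * π * v e) ^ (-(K e : ℝ) / 2)) * τ ^ (((∑ e, K e : ℕ) : ℝ) / 2) *
        exp (-(∑ e, ∑ k, (x e k - μ e) ^ 2 / (2 * v e)) * τ) := by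
  simp only [prod_normalPdf_div _ (hv _) hτ, Fintype.card_fin, prod_mul_distrib, ← exp_sum,
    ← sum_mul, sum_neg_distrib, ← rpow_sum_of_pos hτ, Nat.cast_sum, sum_div]

lemma sum_sum_sq_sub_affine_eq {ι : Type*} [Fintype ι] {K : ι → ℕ} (a b c : ι → ℝ)
    (x : (e : ι) → Fin (K e) → ℝ) (z : ℝ) :
    ∑ e, ∑ k, (x e k - (a e + b e * z)) ^ 2 / (2 * c e ^ 2) =
      (∑ e, ∑ k, (x e k - a e) ^ 2 / c e ^ 2) / 2 -
        z * ∑ e, b e / c e ^ 2 * ∑ k, (x e k - a e) +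
        z ^ 2 / 2 * ∑ e, (K e : ℝ) * b e ^ 2 / c e ^ 2 := by
  have hK : ∀ e, (K e : ℝ) * b e ^ 2 / c e ^ 2 = ∑ _k : Fin (K e), b e ^ 2 / c e ^ 2 := by
    simp [mul_div_assoc]
  simp only [hK, mul_sum, sum_div, ← sum_sub_distrib, ← sum_add_distrib]
  exact sum_congr rfl fun e _ => sum_congr rfl fun k _ => by ring

lemma add_quadratic_eq_complete_square {Q S T lam lam' m' : ℝ} (z : ℝ) (hlam : lam ≠ 0)
    (hlam' : lam' ≠ 0) (hT : lam'⁻¹ = T + lam⁻¹) (hm' : m' = lam' * S) :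
    z ^ 2 / (2 * lam) + (Q / 2 - z * S + z ^ 2 / 2 * T) =
      (Q - m' ^ 2 / lam') / 2 + (z - m') ^ 2 / (2 * lam') := by
  rw [show T = lam'⁻¹ - lam⁻¹ by rw [hT]; ring, hm']
  field_simp
  ring

lemma rpow_neg_half_eq_sqrt_div_mul {u v : ℝ} (hu : 0 < u) (hv : 0 < v) :
    u ^ (-(1 : ℝ) / 2) = √(v / u) * v ^ (-(1 : ℝ) / 2) := by
  rw [sqrt_eq_rpow, div_rpow hv.le hu.le, neg_div, rpow_neg hu.le, rpow_neg hv.le]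
  have : 0 < v ^ (1 / 2 : ℝ) := by positivity
  field_simp

section Posterior

variable {ι : Type*} [Fintype ι] {K : ι → ℕ} (a b c : ι → ℝ) (x : (e : ι) → Fin (K e) → ℝ)
  {lam lam' m' β β' : ℝ}

lemma add_sq_div_add_sum_sum_eq_complete_square (hlam : lam ≠ 0) (hlam' : lam' ≠ 0)
    (hlam'_inv : lam'⁻¹ = (∑ e, (K e : ℝ) * b e ^ 2 / c e ^ 2) + lam⁻¹)
    (hm' : m' = lam' * ∑ e, b e / c e ^ 2 * ∑ k, (x e k - a e))
    (hβ' : β' = β + 1 / 2 * ((∑ e, ∑ k, (x e k - a e) ^ 2 / c e ^ 2) - m' ^ 2 / lam')) (z : ℝ) :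
    β + z ^ 2 / (2 * lam) + ∑ e, ∑ k, (x e k - (a e + b e * z)) ^ 2 / (2 * c e ^ 2) =
      β' + (z - m') ^ 2 / (2 * lam') := by
  rw [add_assoc, sum_sum_sq_sub_affine_eq,
    add_quadratic_eq_complete_square z hlam hlam' hlam'_inv hm', hβ']
  ring

lemma sq_div_le_sum_sum_sq_div (hlam : 0 < lam) (hlam' : 0 < lam')
    (hlam'_inv : lam'⁻¹ = (∑ e, (K e : ℝ) * b e ^ 2 / c e ^ 2) + lam⁻¹)
    (hm' : m' = lam' * ∑ e, b e / c e ^ 2 * ∑ k, (x e k - a e)) :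
    m' ^ 2 / lam' ≤ ∑ e, ∑ k, (x e k - a e) ^ 2 / c e ^ 2 := by
  -- evaluate the completed square at its minimum `z = m'`
  have h := add_sq_div_add_sum_sum_eq_complete_square a b c x hlam.ne' hlam'.ne' hlam'_inv hm'
    rfl m' (β := 0)
  rw [sub_self, zero_pow two_ne_zero, zero_div, add_zero] at h
  have : 0 ≤ m' ^ 2 / (2 * lam) := by positivity
  have : 0 ≤ ∑ e, ∑ k, (x e k - (a e + b e * m')) ^ 2 / (2 * c e ^ 2) := by positivity
  linarith

end Posterior

theorem posterior_normal_gamma_general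
    (E : ℕ) (K : Fin (E + 1) → ℕ)
    (a b c : Fin (E + 1) → ℝ) (hc : ∀ e, 0 < c e)
    (lam α β : ℝ) (hlam : 0 < lam) (hα : 0 < α) (hβ : 0 < β)
    (x : (e : Fin (E + 1)) → Fin (K e) → ℝ)
    (N : ℕ) (hN : N = ∑ e, K e)
    (α' : ℝ) (hα' : α' = α + (N : ℝ) / 2)
    (lam' : ℝ) (hlam' : lam'⁻¹ = (∑ e, (K e : ℝ) * (b e) ^ 2 / (c e) ^ 2) + lam⁻¹)
    (m' : ℝ) (hm' : m' = lam' * ∑ e, (b e / (c e) ^ 2) * ∑ k, (x e k - a e))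
    (β' : ℝ)
    (hβ' : β' = β + (1 / 2) *
      ((∑ e, ∑ k, (x e k - a e) ^ 2 / (c e) ^ 2) - m' ^ 2 / lam'))
    (C : ℝ)
    (hC : C = β ^ α * Real.Gamma α' / (Real.Gamma α * β' ^ α') * Real.sqrt (lam' / lam) *
      ∏ e, (2 * Real.pi * (c e) ^ 2) ^ (-(K e : ℝ) / 2)) :
    ∀ z : ℝ, ∀ τ : ℝ, 0 < τ →
      gammaPdf α β τ * normalPdf 0 (lam / τ) z *
        (∏ e, ∏ k, normalPdf (a e + b e * z) ((c e) ^ 2 / τ) (x e k)) =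
      C * gammaPdf α' β' τ * normalPdf m' (lam' / τ) z := by
  intro z τ hτ
  have hlam'_pos : 0 < lam' := inv_pos.mp (by rw [hlam']; positivity)
  have hexponent := add_sq_div_add_sum_sum_eq_complete_square a b c x hlam.ne' hlam'_pos.ne'
    hlam' hm' hβ'
  have hβ'_pos : 0 < β' := by
    have := sq_div_le_sum_sum_sq_div a b c x hlam hlam'_pos hlam' hm'
    rw [hβ']
    linarith
  have hconst : β ^ α / Gamma α * (2 * π * lam) ^ (-(1 : ℝ) / 2) *
      ∏ e, (2 * π * c e ^ 2) ^ (-(K e : ℝ) / 2) =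
      C * (β' ^ α' / Gamma α' * (2 * π * lam') ^ (-(1 : ℝ) / 2)) := by
    have hΓ : Gamma α' ≠ 0 := (Gamma_pos_of_pos (by rw [hα']; positivity)).ne'
    have hβ'α' : β' ^ α' ≠ 0 := (rpow_pos_of_pos hβ'_pos α').ne'
    rw [hC, rpow_neg_half_eq_sqrt_div_mul (v := 2 * π * lam') (by positivity) (by positivity),
      mul_div_mul_left _ _ (by positivity : 2 * π ≠ 0)]
    field_simp
  rw [gammaPdf_mul_normalPdf_div z hlam hτ, mul_assoc C,
    gammaPdf_mul_normalPdf_div z hlam'_pos hτ, sub_zero,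
    prod_prod_normalPdf_div _ (fun e => c e ^ 2) (fun e => pow_pos (hc e) 2) hτ, ← hN]
  set W := ∑ e, ∑ k, (x e k - (a e + b e * z)) ^ 2 / (2 * c e ^ 2)
  calc _ = β ^ α / Gamma α * (2 * π * lam) ^ (-(1 : ℝ) / 2) *
          (∏ e, (2 * π * c e ^ 2) ^ (-(K e : ℝ) / 2)) * (τ ^ (α - 1 / 2) * τ ^ ((N : ℝ) / 2)) *
          exp (-(β + z ^ 2 / (2 * lam) + W) * τ) := by
        rw [show -(β + z ^ 2 / (2 * lam) + W) * τ = -(β + z ^ 2 / (2 * lam)) * τ + -W * τ by ring,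
          exp_add]
        ring
    _ = _ := by
        rw [hconst, ← rpow_add hτ, hexponent,
          show α - 1 / 2 + N / 2 = α' - 1 / 2 by rw [hα']; ring]
        ring

/-- In the exchangeable Gamma-Normal mixed effect model, the joint density of the latent
pair `(Z, τ)` and the data factorizes as a constant times a Normal-Gamma density with
updated parameters `(m', λ', α', β')`: the posterior is again Normal-Gamma. -/
theorem posterior_normal_gamma
    (E : ℕ) (K : Fin (E + 1) → ℕ) (hK : ∀ e, 1 ≤ K e)
    (a b c : Fin (E + 1) → ℝ) (hc : ∀ e, 0 < c e)
    (lam α β : ℝ) (hlam : 0 < lam) (hα : 0 < α) (hβ : 0 < β)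
    (x : (e : Fin (E + 1)) → Fin (K e) → ℝ)
    (N : ℕ) (hN : N = ∑ e, K e)
    (α' : ℝ) (hα' : α' = α + (N : ℝ) / 2)
    (lam' : ℝ) (hlam' : lam'⁻¹ = (∑ e, (K e : ℝ) * (b e) ^ 2 / (c e) ^ 2) + lam⁻¹)
    (m' : ℝ) (hm' : m' = lam' * ∑ e, (b e / (c e) ^ 2) * ∑ k, (x e k - a e))
    (β' : ℝ)
    (hβ' : β' = β + (1 / 2) *
      ((∑ e, ∑ k, (x e k - a e) ^ 2 / (c e) ^ 2) - m' ^ 2 / lam'))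
    (C : ℝ)
    (hC : C = β ^ α * Real.Gamma α' / (Real.Gamma α * β' ^ α') * Real.sqrt (lam' / lam) *
      ∏ e, (2 * Real.pi * (c e) ^ 2) ^ (-(K e : ℝ) / 2)) :
    ∀ z : ℝ, ∀ τ : ℝ, 0 < τ →
      gammaPdf α β τ * normalPdf 0 (lam / τ) z *
        (∏ e, ∏ k, normalPdf (a e + b e * z) ((c e) ^ 2 / τ) (x e k)) =
      C * gammaPdf α' β' τ * normalPdf m' (lam' / τ) z :=
  posterior_normal_gamma_general E K a b c hc lam α β hlam hα hβ x N hN α' hα' lam' hlam' m' hm' β'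
    hβ' C hC
end

section
/- Fix E ≥ 0 groups indexed by e with sizes K_e ≥ 1, real parameters a_e, b_e, positive parameters c_e, and λ > 0. For data x_{e,k} ∈ ℝ define 1/λ' = Σ_e K_e b_e²/c_e² + 1/λ and m' = λ' · Σ_e (b_e/c_e²) · Σ_{k=1}^{K_e} (x_{e,k} − a_e). Then m'²/λ' ≤ Σ_e Σ_{k=1}^{K_e} (x_{e,k} − a_e)²/c_e². Consequently, for any β > 0, the updated parameter β' = β + (1/2)·( Σ_{e,k} (x_{e,k} − a_e)²/c_e² − m'²/λ' ) satisfies β' ≥ β > 0, so the posterior Normal-Gamma parameters are well defined. -/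
/-!
Cauchy–Schwarz over all pairs `(e, k)`, applied to `b_e / c_e` and `(x_{e,k} - a_e) / c_e`,
gives `S² ≤ A T`, where `A = Σ_e K_e b_e²/c_e²`, `S = Σ_e (b_e/c_e²) Σ_k (x_{e,k} - a_e)` and `T` is
the weighted sum of squares. Since `m' = λ' S` and `A ≤ 1/λ'`, we get `m'²/λ' = λ' S² ≤ λ' A T ≤ T`.
-/

open Finset

theorem sq_sum_mul_sum_le {ι : Type*} [Fintype ι] {κ : ι → Type*} [∀ i, Fintype (κ i)]
    (u : ι → ℝ) (v : (i : ι) → κ i → ℝ) :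
    (∑ i, u i * ∑ k, v i k) ^ 2 ≤
      (∑ i, (Fintype.card (κ i) : ℝ) * u i ^ 2) * ∑ i, ∑ k, v i k ^ 2 := by
  have h := sum_mul_sq_le_sq_mul_sq (univ : Finset ((i : ι) × κ i))
    (fun p => u p.1) (fun p => v p.1 p.2)
  simp only [Fintype.sum_sigma] at h
  simpa only [mul_sum, sum_const, card_univ, nsmul_eq_mul] using h

theorem mul_sq_div_le_of_sq_le_mul {l S A T : ℝ} (hl : 0 < l) (hA : A ≤ l⁻¹) (hT : 0 ≤ T)
    (hS : S ^ 2 ≤ A * T) : (l * S) ^ 2 / l ≤ T :=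
  calc (l * S) ^ 2 / l = l * S ^ 2 := by field_simp
    _ ≤ l * (A * T) := by gcongr
    _ ≤ l * (l⁻¹ * T) := by gcongr
    _ = T := by field_simp

theorem posterior_beta_well_defined_general
    (E : ℕ) (K : Fin (E + 1) → ℕ)
    (a b c : Fin (E + 1) → ℝ)
    (lam : ℝ) (hlam : 0 < lam)
    (x : (e : Fin (E + 1)) → Fin (K e) → ℝ)
    (lam' : ℝ) (hlam' : lam'⁻¹ = (∑ e, (K e : ℝ) * (b e) ^ 2 / (c e) ^ 2) + lam⁻¹)
    (m' : ℝ) (hm' : m' = lam' * ∑ e, (b e / (c e) ^ 2) * ∑ k, (x e k - a e)) :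
    m' ^ 2 / lam' ≤ (∑ e, ∑ k, (x e k - a e) ^ 2 / (c e) ^ 2) ∧
    ∀ β : ℝ, 0 < β →
      β ≤ β + (1 / 2) * ((∑ e, ∑ k, (x e k - a e) ^ 2 / (c e) ^ 2) - m' ^ 2 / lam') ∧
      0 < β + (1 / 2) * ((∑ e, ∑ k, (x e k - a e) ^ 2 / (c e) ^ 2) - m' ^ 2 / lam') := by
  have hlam'_pos : 0 < lam' := inv_pos.mp (by rw [hlam']; positivity)
  have hCS := sq_sum_mul_sum_le (fun e => b e / c e) (fun e k => (x e k - a e) / c e)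
  simp only [Fintype.card_fin, div_pow] at hCS
  have hbound : m' ^ 2 / lam' ≤ ∑ e, ∑ k, (x e k - a e) ^ 2 / (c e) ^ 2 := by
    rw [hm']
    refine mul_sq_div_le_of_sq_le_mul (A := ∑ e, (K e : ℝ) * b e ^ 2 / c e ^ 2) hlam'_pos
      ?_ (by positivity) ?_
    · rw [hlam']
      exact le_add_of_nonneg_right (inv_pos.mpr hlam).le
    · convert hCS using 3 with e
      · rw [← sum_div]; ring
      · ring
  exact ⟨hbound, fun β hβ => ⟨by linarith, by linarith⟩⟩

/-- The posterior Normal-Gamma parameters are well defined: `m'²/λ'` is bounded by the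
weighted sum of squares, hence the updated rate `β'` satisfies `β' ≥ β > 0`. -/
theorem posterior_beta_well_defined
    (E : ℕ) (K : Fin (E + 1) → ℕ) (hK : ∀ e, 1 ≤ K e)
    (a b c : Fin (E + 1) → ℝ) (hc : ∀ e, 0 < c e)
    (lam : ℝ) (hlam : 0 < lam)
    (x : (e : Fin (E + 1)) → Fin (K e) → ℝ)
    (lam' : ℝ) (hlam' : lam'⁻¹ = (∑ e, (K e : ℝ) * (b e) ^ 2 / (c e) ^ 2) + lam⁻¹)
    (m' : ℝ) (hm' : m' = lam' * ∑ e, (b e / (c e) ^ 2) * ∑ k, (x e k - a e)) :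
    m' ^ 2 / lam' ≤ (∑ e, ∑ k, (x e k - a e) ^ 2 / (c e) ^ 2) ∧
    ∀ β : ℝ, 0 < β →
      β ≤ β + (1 / 2) * ((∑ e, ∑ k, (x e k - a e) ^ 2 / (c e) ^ 2) - m' ^ 2 / lam') ∧
      0 < β + (1 / 2) * ((∑ e, ∑ k, (x e k - a e) ^ 2 / (c e) ^ 2) - m' ^ 2 / lam') :=
  posterior_beta_well_defined_general E K a b c lam hlam x lam' hlam' m' hm'
end

section
/- Let m ∈ ℝ, v > 0 and γ > 0. Let μ_N be the Gaussian measure on ℝ with mean m and variance v, and let f : ℝ → ℝ be defined by f(x) = x^{1/γ} for x > 0 and f(x) = 0 for x ≤ 0 (the inverse power transform with left-censoring at 0). Then the pushforward of μ_N under f equals Ψ_{m,v}(0)·δ_0 + μ_c, where δ_0 is the Dirac mass at 0, Ψ_{m,v}(0) = ∫_{−∞}^0 φ_{m,v}(x) dx, and μ_c is the measure on ℝ absolutely continuous with respect to Lebesgue measure with density y ↦ φ_{m,v}(y^γ)·γ·y^{γ−1} for y > 0 and 0 for y ≤ 0. In particular, if Y ~ N(m, v) and Y' = f(Y), then P(Y'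 = 0) = Ψ_{m,v}(0) and the continuous part of the law of Y' has density φ_{m,v}(y'^γ)·γ·y'^{γ−1} on (0, ∞). -/
/-!
Split the Gaussian law into its restrictions to `(-∞, 0]` and `(0, ∞)`. The censored map is
constant on the first half, which therefore becomes the atom `Ψ_{m,v}(0) δ₀`. On the second half
it is the inverse of the diffeomorphism `y ↦ y ^ γ` of `(0, ∞)`, and the one-dimensional change of
variables formula turns the Gaussian density `φ` into `φ(y ^ γ) · γ y ^ (γ - 1)`.
-/

open MeasureTheory ProbabilityTheory

open Set
open scoped ENNReal

lemma normalPdf_eq_gaussianPDFReal (m : ℝ) (v : NNReal) (x : ℝ) :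
    normalPdf m v x = gaussianPDFReal m v x := by
  unfold normalPdf gaussianPDFReal
  rw [Real.sqrt_eq_rpow, ← Real.rpow_neg (by positivity)]
  norm_num

namespace MeasureTheory.Measure

lemma map_restrict_eq_smul_dirac_of_eqOn {α β : Type*} [MeasurableSpace α] [MeasurableSpace β]
    {μ : Measure α} {s : Set α} {f : α → β} {c : β} (hs : MeasurableSet s)
    (hf : EqOn f (fun _ ↦ c) s) :
    (μ.restrict s).map f = μ s • dirac c := by
  rw [map_congr (ae_restrict_of_forall_mem hs hf), map_const, restrict_apply_univ]

lemma map_restrict_image_withDensity {s : Set ℝ} {g g' h : ℝ → ℝ} (ρ : ℝ → ℝ≥0∞)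
    (hs : MeasurableSet s) (hg' : ∀ y ∈ s, HasDerivWithinAt g (g' y) s y) (hh : Measurable h)
    (hhg : LeftInvOn h g s) :
    ((volume.withDensity ρ).restrict (g '' s)).map h =
      (volume.restrict s).withDensity fun y ↦ ENNReal.ofReal |g' y| * ρ (g y) := by
  ext t ht
  rw [map_apply hh ht, restrict_apply (hh ht), withDensity_apply' _, ← hhg.image_inter',
    lintegral_image_eq_lintegral_abs_deriv_mul (ht.inter hs)
      (fun y hy ↦ (hg' y hy.2).mono inter_subset_right) (hhg.injOn.mono inter_subset_right),
    withDensity_apply _ ht, restrict_restrict ht]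

end MeasureTheory.Measure

lemma Real.rpow_image_Ioi_zero {γ : ℝ} (hγ : γ ≠ 0) : (fun y : ℝ ↦ y ^ γ) '' Ioi 0 = Ioi 0 := by
  ext z
  constructor
  · rintro ⟨y, hy, rfl⟩
    exact Real.rpow_pos_of_pos hy γ
  · intro hz
    exact ⟨z ^ γ⁻¹, Real.rpow_pos_of_pos hz _, Real.rpow_inv_rpow (le_of_lt hz) hγ⟩

lemma gaussianReal_restrict_Ioi_map_rpow (m : ℝ) {v : NNReal} (hv : v ≠ 0) {γ : ℝ} (hγ : γ ≠ 0) :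
    ((gaussianReal m v).restrict (Ioi 0)).map (fun x ↦ x ^ (1 / γ)) =
      (volume.restrict (Ioi 0)).withDensity fun y ↦
        ENNReal.ofReal |γ * y ^ (γ - 1)| * gaussianPDF m v (y ^ γ) := by
  conv_lhs => rw [gaussianReal_of_var_ne_zero m hv, ← Real.rpow_image_Ioi_zero hγ]
  refine Measure.map_restrict_image_withDensity _ measurableSet_Ioi
    (fun y hy ↦ (Real.hasDerivAt_rpow_const (Or.inl (mem_Ioi.1 hy).ne')).hasDerivWithinAt)
    (measurable_id.pow_const _) (fun y hy ↦ ?_)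
  rw [one_div, Real.rpow_rpow_inv (le_of_lt hy) hγ]

/-- Pushing forward a Gaussian law through the left-censored inverse power transform
`x ↦ x^(1/γ) 𝟙_{x > 0}` yields a zero-inflated law: an atom at `0` of mass
`Ψ_{m,v}(0)` plus an absolutely continuous part with density
`y ↦ φ_{m,v}(y^γ) γ y^(γ-1)` on `(0, ∞)` (the Tobit precipitation model). -/
theorem tobit_pushforward (m : ℝ) (v : NNReal) (hv : 0 < v) (γ : ℝ) (hγ : 0 < γ) :
    Measure.map (fun x : ℝ => if 0 < x then x ^ (1 / γ) else 0) (gaussianReal m v) =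
      ENNReal.ofReal (∫ x in Set.Iic (0 : ℝ), normalPdf m (v : ℝ) x) • Measure.dirac (0 : ℝ) +
        volume.withDensity (fun y : ℝ =>
          ENNReal.ofReal
            (if 0 < y then normalPdf m (v : ℝ) (y ^ γ) * γ * y ^ (γ - 1) else 0)) := by
  have hF : Measurable fun x : ℝ ↦ if 0 < x then x ^ (1 / γ) else 0 :=
    Measurable.ite measurableSet_Ioi (measurable_id.pow_const _) measurable_const
  have hdensity : (fun y : ℝ ↦ ENNReal.ofReal
        (if 0 < y then normalPdf m v (y ^ γ) * γ * y ^ (γ - 1) else 0)) =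
      (Ioi 0).indicator fun y ↦ ENNReal.ofReal |γ * y ^ (γ - 1)| * gaussianPDF m v (y ^ γ) := by
    ext y
    by_cases hy : 0 < y
    · have : 0 < γ * y ^ (γ - 1) := mul_pos hγ (Real.rpow_pos_of_pos hy _)
      rw [if_pos hy, indicator_of_mem (mem_Ioi.2 hy), abs_of_pos this, gaussianPDF,
        normalPdf_eq_gaussianPDFReal, ← ENNReal.ofReal_mul this.le, mul_assoc, mul_comm]
    · rw [if_neg hy, indicator_of_notMem (notMem_Ioi.2 (not_lt.1 hy)), ENNReal.ofReal_zero]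
  conv_lhs => rw [← Measure.restrict_add_restrict_compl (μ := gaussianReal m v)
    (measurableSet_Iic (a := 0))]
  rw [Measure.map_add _ _ hF, compl_Iic, hdensity, withDensity_indicator measurableSet_Ioi,
    ← gaussianReal_restrict_Ioi_map_rpow m hv.ne' hγ.ne']
  congr 1
  · rw [Measure.map_restrict_eq_smul_dirac_of_eqOn measurableSet_Iic
      (fun x hx ↦ if_neg (not_lt.2 hx)), gaussianReal_apply_eq_integral m hv.ne']
    simp only [normalPdf_eq_gaussianPDFReal]
  · exact Measure.map_congr (ae_restrict_of_forall_mem measurableSet_Ioi fun x hx ↦ if_pos hx)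
end
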